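/- There exists an absolute constant C > 0 such that for all z ∈ ℍ and all n ≥ max(4, 2|Re z|), ∫_{|x| > n} |s̃ₓ(z) − z|² dx < C/n, where s̃ₓ(z) = x + √((z−x)² − 1). -/

import Mathlib

open Complex MeasureTheory Filter

/-- Complex square root with the branch chosen in the closed upper half-plane. -/
noncomputable def csqrtH (w : ℂ) : ℂ :=
  if 0 ≤ (w ^ (1/2 : ℂ)).im then w ^ (1/2 : ℂ) else -(w ^ (1/2 : ℂ))

/-- The slit map at `x`: `s̃ₓ(z) = x + √((z-x)² - 1)`, branch mapping ℍ into ℍ. -/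
noncomputable def slitAt (x : ℝ) (z : ℂ) : ℂ := x + csqrtH ((z - x) ^ 2 - 1)

/-- The complex derivative of the slit map at `x`: `(z-x)/√((z-x)² - 1)`. -/
noncomputable def slitDerivAt (x : ℝ) (z : ℂ) : ℂ := (z - x) / csqrtH ((z - x) ^ 2 - 1)

/-!
With `w = z - x` and `v = √(w² - 1)` we have `s̃ₓ(z) - z = v - w` and `(v - w)(v + w) = -1`.
Since `v` and `w` both lie in the upper half-plane and `Im (v²) = Im (w²)`, the real parts of
`v` and `w` have the same sign, so `|v + w| ≥ |Re w| ≥ |x| / 2` once `|x| ≥ 2 |Re z|`.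
Hence `|s̃ₓ(z) - z|² ≤ 4 / x²`, whose integral over `|x| > n` is `8 / n`.
-/

open Set

theorem csqrtH_sq (w : ℂ) : csqrtH w ^ 2 = w := by
  have h : (w ^ (1/2 : ℂ)) ^ 2 = w := by
    simpa only [one_div] using cpow_ofNat_inv_pow w 2
  unfold csqrtH
  split_ifs <;> simpa only [neg_sq] using h

theorem csqrtH_im_nonneg (w : ℂ) : 0 ≤ (csqrtH w).im := by
  unfold csqrtH
  split_ifs with h
  · exact h
  · rw [neg_im]
    linarith

theorem measurable_csqrtH : Measurable csqrtH := by
  have hm : Measurable fun w : ℂ => w ^ (1/2 : ℂ) := measurable_id.pow_const _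
  exact Measurable.ite (measurableSet_le measurable_const (measurable_im.comp hm)) hm hm.neg

/-- `v.re * v.im = w.re * w.im`, so `v.re` and `w.re` cannot have opposite signs. -/
theorem abs_re_le_norm_add_of_im_sq_eq {v w : ℂ} (hv : 0 ≤ v.im) (hw : 0 < w.im)
    (h : (v ^ 2).im = (w ^ 2).im) : |w.re| ≤ ‖v + w‖ := by
  have hprod : v.re * v.im = w.re * w.im := by
    simp only [sq, mul_im] at h
    linarith
  have hsign : 0 ≤ v.re * w.re := by
    rcases hv.lt_or_eq with hv_pos | hv_zero
    · have hscaled : v.re * w.re * v.im = w.re ^ 2 * w.im := by linear_combination w.re * hprod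
      exact nonneg_of_mul_nonneg_left (hscaled ▸ by positivity) hv_pos
    · rw [← hv_zero, mul_zero, zero_eq_mul] at hprod
      rcases hprod with hre | him
      · rw [hre, mul_zero]
      · exact absurd him hw.ne'
  calc |w.re| ≤ |(v + w).re| := by
        rw [add_re, ← sq_le_sq]
        nlinarith
    _ ≤ ‖v + w‖ := abs_re_le_norm _

theorem norm_csqrtH_sq_sub_one_sub_mul_abs_re_le_one {w : ℂ} (hw : 0 < w.im) :
    ‖csqrtH (w ^ 2 - 1) - w‖ * |w.re| ≤ 1 := by
  set v := csqrtH (w ^ 2 - 1)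
  have hv : v ^ 2 = w ^ 2 - 1 := csqrtH_sq _
  have hunit : ‖v - w‖ * ‖v + w‖ = 1 := by
    rw [← norm_mul, show (v - w) * (v + w) = -1 by linear_combination hv, norm_neg, norm_one]
  have hre : |w.re| ≤ ‖v + w‖ :=
    abs_re_le_norm_add_of_im_sq_eq (csqrtH_im_nonneg _) hw (by rw [hv]; simp)
  calc ‖v - w‖ * |w.re| ≤ ‖v - w‖ * ‖v + w‖ := by gcongr
    _ = 1 := hunit

theorem sq_norm_slitAt_sub_le {z : ℂ} (hz : 0 < z.im) {x : ℝ} (hx : x ≠ 0)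
    (hxz : 2 * |z.re| ≤ |x|) : ‖slitAt x z - z‖ ^ 2 ≤ 4 / x ^ 2 := by
  have hw : 0 < (z - x).im := by simpa using hz
  have hbound := norm_csqrtH_sq_sub_one_sub_mul_abs_re_le_one hw
  have hre : |x| ≤ 2 * |(z - x).re| := by
    have := abs_sub_abs_le_abs_sub x z.re
    rw [sub_re, ofReal_re, abs_sub_comm]
    linarith
  have hslit : slitAt x z - z = csqrtH ((z - x) ^ 2 - 1) - (z - x) := by
    rw [slitAt]; ring
  have hle : ‖slitAt x z - z‖ * |x| ≤ 2 := by
    rw [hslit]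
    nlinarith [norm_nonneg (csqrtH ((z - x) ^ 2 - 1) - (z - x))]
  have hx0 : 0 < |x| := abs_pos.mpr hx
  calc ‖slitAt x z - z‖ ^ 2 ≤ (2 / |x|) ^ 2 := by gcongr; rwa [le_div_iff₀ hx0]
    _ = 4 / x ^ 2 := by rw [div_pow, sq_abs]; norm_num

theorem measurable_slitAt_sub (z : ℂ) : Measurable fun x : ℝ => slitAt x z - z := by
  unfold slitAt
  exact (measurable_ofReal.add (measurable_csqrtH.comp (by fun_prop))).sub_const z

theorem measurableSet_lt_abs (n : ℝ) : MeasurableSet {x : ℝ | n < |x|} :=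
  measurableSet_lt measurable_const continuous_abs.measurable

theorem integral_Ioi_inv_sq {c : ℝ} (hc : 0 < c) : ∫ x in Ioi c, (x ^ 2)⁻¹ = c⁻¹ := by
  have hrpow : ∀ x ∈ Ioi c, (x ^ 2)⁻¹ = x ^ (-2 : ℝ) := fun x hx => by
    rw [Real.rpow_neg (hc.trans hx).le, Real.rpow_two]
  rw [setIntegral_congr_fun measurableSet_Ioi hrpow, integral_Ioi_rpow_of_lt (by norm_num) hc]
  norm_num [Real.rpow_neg_one]

theorem integral_inv_sq_abs_gt {n : ℝ} (hn : 0 < n) :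
    ∫ x in {x : ℝ | n < |x|}, (x ^ 2)⁻¹ = 2 / n := by
  have hind : ∀ x : ℝ, {x : ℝ | n < |x|}.indicator (fun x => (x ^ 2)⁻¹) x
      = (Ioi n).indicator (fun t => (t ^ 2)⁻¹) |x| := fun x => by
    simp only [indicator, mem_ofPred_eq, mem_Ioi, sq_abs]
  rw [← integral_indicator (measurableSet_lt_abs n), funext hind,
    integral_comp_abs, setIntegral_indicator measurableSet_Ioi, Ioi_inter_Ioi, max_eq_right hn.le,
    integral_Ioi_inv_sq hn, div_eq_mul_inv]

theorem integrableOn_inv_sq_abs_gt {n : ℝ} (hn : 0 < n) :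
    IntegrableOn (fun x : ℝ => (x ^ 2)⁻¹) {x : ℝ | n < |x|} :=
  Integrable.of_integral_ne_zero (by rw [integral_inv_sq_abs_gt hn]; positivity)

/-- `∫_{|x|>n} |s̃ₓ(z) - z|² dx < C/n` whenever `n ≥ max(4, 2|Re z|)`. -/
theorem stmt_6 :
    ∃ C > (0:ℝ), ∀ z : ℂ, 0 < z.im → ∀ n : ℝ, max 4 (2 * |z.re|) ≤ n →
      IntegrableOn (fun x : ℝ => ‖slitAt x z - z‖ ^ 2) {x : ℝ | n < |x|} ∧
      (∫ x in {x : ℝ | n < |x|}, ‖slitAt x z - z‖ ^ 2) < C / n := by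
  refine ⟨9, by norm_num, fun z hz n hn => ?_⟩
  obtain ⟨hn4, hnz⟩ := max_le_iff.mp hn
  have hn0 : 0 < n := by linarith
  have hS := measurableSet_lt_abs n
  have hbound : ∀ x ∈ {x : ℝ | n < |x|}, ‖slitAt x z - z‖ ^ 2 ≤ 4 * (x ^ 2)⁻¹ :=
    fun x hx => by
      rw [← div_eq_mul_inv]
      exact sq_norm_slitAt_sub_le hz (abs_pos.mp (hn0.trans hx)) (hnz.trans hx.le)
  have hdom := (integrableOn_inv_sq_abs_gt hn0).const_mul 4
  have hint : IntegrableOn (fun x : ℝ => ‖slitAt x z - z‖ ^ 2) {x : ℝ | n < |x|} := by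
    refine hdom.mono' ((measurable_slitAt_sub z).norm.pow_const 2).aestronglyMeasurable ?_
    refine (ae_restrict_iff' hS).mpr (ae_of_all _ fun x hx => ?_)
    rw [Real.norm_of_nonneg (by positivity)]
    exact hbound x hx
  refine ⟨hint, ?_⟩
  calc (∫ x in {x : ℝ | n < |x|}, ‖slitAt x z - z‖ ^ 2)
      ≤ ∫ x in {x : ℝ | n < |x|}, 4 * (x ^ 2)⁻¹ := setIntegral_mono_on hint hdom hS hbound
    _ = 8 / n := by rw [integral_const_mul, integral_inv_sq_abs_gt hn0]; ring
    _ < 9 / n := by gcongr; norm_num
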